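/- arXiv:1306.1201 — 4 statements merged into one kernel-verified Lean document; each statement's English description precedes it below -/
import Mathlib

section
/- Let a ∈ (0,1] and n be a natural number. Then lim_{A → 0+} A^{(n+1)/a} · ∑_{p=1}^∞ p^n · exp(−A·p^a) = Γ((n+1)/a) / a. -/
/-!
A nonnegative function `f` on `[0, ∞)` that increases up to a peak `c` and decreases afterwards
satisfies `|∑_{k ≥ 1} f k - ∫_0^∞ f| ≤ 2 f c`: comparing each `f k` with the integral of `f` over
a neighbouring unit interval works everywhere except on the unit interval containing the peak.
Applied to `x ↦ f (ε x)`, the Riemann sums `ε ∑_{k ≥ 1} f (ε k)` converge to `∫_0^∞ f` with an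
error `O(ε)`. For `f x = x ^ n * exp (-x ^ a)`, which peaks at `(n / a) ^ (1 / a)`, the
substitution `ε = A ^ (1 / a)` turns these Riemann sums into `A ^ ((n + 1) / a) ∑ p ^ n e^{-A p^a}`,
and `∫_0^∞ x ^ n e^{-x ^ a} dx = Γ((n + 1) / a) / a`.
-/

open Filter Real Set MeasureTheory Topology

section Unimodal

variable {f : ℝ → ℝ} {c : ℝ}

lemma MonotoneOn.apply_le_of_antitoneOn (mono : MonotoneOn f (Icc 0 c))
    (anti : AntitoneOn f (Ici c)) {t : ℝ} (ht : 0 ≤ t) : f t ≤ f c := by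
  rcases le_total t c with h | h
  · exact mono ⟨ht, h⟩ ⟨ht.trans h, le_rfl⟩ h
  · exact anti self_mem_Ici h h

lemma MonotoneOn.sum_range_succ_le_integral_add {N : ℕ} (mono : MonotoneOn f (Icc 0 N))
    (nonneg : 0 ≤ f 0) :
    ∑ i ∈ Finset.range N, f (i + 1) ≤ (∫ x in (0 : ℝ)..N, f x) + f N := by
  have h := MonotoneOn.sum_le_integral (x₀ := 0) (a := N) (by simpa using mono)
  simp only [zero_add] at h
  have shift : ∑ i ∈ Finset.range N, f (i + 1) + f 0 = ∑ i ∈ Finset.range N, f i + f N := by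
    rw [← Finset.sum_range_succ, Finset.sum_range_succ']
    push_cast
    rfl
  linarith

lemma AntitoneOn.tsum_add_one_le_integral_Ioi_le_add_tsum {M : ℕ} (anti : AntitoneOn f (Ici M))
    (integrable : IntegrableOn f (Ioi M)) (nonneg : ∀ t ∈ Ioi (M : ℝ), 0 ≤ f t) :
    ∑' n : ℕ, f (n + M + 1) ≤ ∫ x in Ioi (M : ℝ), f x ∧
      ∫ x in Ioi (M : ℝ), f x ≤ f M + ∑' n : ℕ, f (n + M + 1) := by
  have summable : Summable fun n : ℕ => f n := anti.summable_of_integrableOn_Ioi integrable nonneg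
  refine ⟨by simpa using anti.tsum_comp_add_le_integral M integrable nonneg, ?_⟩
  have h := anti.integral_le_tsum_comp_add M summable nonneg
  rw [((summable_nat_add_iff M).mpr summable).tsum_eq_zero_add] at h
  refine h.trans_eq (congrArg₂ (· + ·) (by simp) (tsum_congr fun n => ?_))
  push_cast
  ring_nf

theorem abs_tsum_sub_integral_le_of_unimodal (hc : 0 ≤ c) (mono : MonotoneOn f (Icc 0 c))
    (anti : AntitoneOn f (Ici c)) (integrable : IntegrableOn f (Ioi 0))
    (nonneg : ∀ t, 0 ≤ t → 0 ≤ f t) :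
    |∑' n : ℕ, f (n + 1) - ∫ x in Ioi 0, f x| ≤ 2 * f c := by
  set N := ⌊c⌋₊
  -- `N ≤ c < N + 1`, so `f` is monotone on `[0, N]` and antitone on `[N + 1, ∞)`.
  have le_peak t (ht : 0 ≤ t) : f t ≤ f c := mono.apply_le_of_antitoneOn anti ht
  have head_mono : MonotoneOn f (Icc 0 N) := mono.mono (Icc_subset_Icc_right (Nat.floor_le hc))
  have tail_anti : AntitoneOn f (Ici ((N + 1 : ℕ) : ℝ)) :=
    anti.mono (Ici_subset_Ici.mpr (by push_cast; exact (Nat.lt_floor_add_one c).le))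
  have tail_integrable : IntegrableOn f (Ioi ((N + 1 : ℕ) : ℝ)) :=
    integrable.mono_set (Ioi_subset_Ioi (Nat.cast_nonneg _))
  have tail_nonneg : ∀ t ∈ Ioi ((N + 1 : ℕ) : ℝ), 0 ≤ f t :=
    fun t ht => nonneg t ((Nat.cast_nonneg _).trans ht.le)
  have summable_nat : Summable fun n : ℕ => f n :=
    tail_anti.summable_of_integrableOn_Ioi tail_integrable tail_nonneg
  have summable : Summable fun n : ℕ => f (n + 1) := by
    simpa using (summable_nat_add_iff 1).mpr summable_nat
  have sum_split : ∑' n : ℕ, f (n + 1) = ∑ i ∈ Finset.range N, f (i + 1) + f (N + 1) +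
      ∑' n : ℕ, f (n + (N + 1) + 1) := by
    rw [← summable.sum_add_tsum_nat_add (N + 1), Finset.sum_range_succ]
    push_cast
    ring_nf
  have integral_split : ∫ x in Ioi 0, f x = (∫ x in (0 : ℝ)..N, f x) +
      (∫ x in (N : ℝ)..(N + 1), f x) + ∫ x in Ioi ((N + 1 : ℕ) : ℝ), f x := by
    have integrable_N : IntegrableOn f (Ioi (N : ℝ)) :=
      integrable.mono_set (Ioi_subset_Ioi (Nat.cast_nonneg _))
    rw [← intervalIntegral.integral_interval_add_Ioi integrable integrable_N,
      ← intervalIntegral.integral_interval_add_Ioi integrable_N tail_integrable]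
    push_cast
    ring
  have gap_nonneg : 0 ≤ ∫ x in (N : ℝ)..(N + 1), f x :=
    intervalIntegral.integral_nonneg (by linarith)
      fun t ht => nonneg t ((Nat.cast_nonneg _).trans ht.1)
  have gap_le : ∫ x in (N : ℝ)..(N + 1), f x ≤ f c := by
    have integrable_gap : IntervalIntegrable f volume N (N + 1) :=
      (intervalIntegrable_iff_integrableOn_Ioc_of_le (by linarith)).mpr
        (integrable.mono_set fun t ht => (Nat.cast_nonneg N).trans_lt ht.1)
    simpa using intervalIntegral.integral_mono_on (by linarith) integrable_gap
      intervalIntegrable_const fun t ht => le_peak t ((Nat.cast_nonneg _).trans ht.1)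
  have head_lower : ∫ x in (0 : ℝ)..N, f x ≤ ∑ i ∈ Finset.range N, f (i + 1) := by
    simpa using MonotoneOn.integral_le_sum (x₀ := 0) (a := N) (by simpa using head_mono)
  have head_upper := head_mono.sum_range_succ_le_integral_add (nonneg 0 le_rfl)
  obtain ⟨tail_upper, tail_lower⟩ :=
    tail_anti.tsum_add_one_le_integral_Ioi_le_add_tsum tail_integrable tail_nonneg
  push_cast at tail_upper tail_lower integral_split
  have peak_N := le_peak N (Nat.cast_nonneg _)
  have peak_N1 := le_peak (N + 1) (by positivity)
  have nonneg_N1 := nonneg (N + 1) (by positivity)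
  rw [abs_le, sum_split, integral_split]
  constructor <;> linarith

theorem abs_mul_tsum_sub_integral_le_of_unimodal (hc : 0 ≤ c) (mono : MonotoneOn f (Icc 0 c))
    (anti : AntitoneOn f (Ici c)) (integrable : IntegrableOn f (Ioi 0))
    (nonneg : ∀ t, 0 ≤ t → 0 ≤ f t) {ε : ℝ} (hε : 0 < ε) :
    |ε * ∑' n : ℕ, f (ε * (n + 1)) - ∫ x in Ioi 0, f x| ≤ 2 * f c * ε := by
  have mem_Icc {x : ℝ} (hx : x ∈ Icc 0 (c / ε)) : ε * x ∈ Icc 0 c :=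
    ⟨by nlinarith [hx.1], (le_div_iff₀' hε).mp hx.2⟩
  have mem_Ici {x : ℝ} (hx : x ∈ Ici (c / ε)) : ε * x ∈ Ici c := (div_le_iff₀' hε).mp hx
  have bound := abs_tsum_sub_integral_le_of_unimodal (f := fun x => f (ε * x))
    (div_nonneg hc hε.le)
    (fun x hx y hy hxy => mono (mem_Icc hx) (mem_Icc hy) (by gcongr))
    (fun x hx y hy hxy => anti (mem_Ici hx) (mem_Ici hy) (by gcongr))
    ((integrableOn_Ioi_comp_mul_left_iff f 0 hε).mpr (by simpa using integrable))
    (fun t ht => nonneg _ (by positivity))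
  have scaled : ∫ x in Ioi 0, f (ε * x) = ε⁻¹ * ∫ x in Ioi 0, f x := by
    simpa using integral_comp_mul_left_Ioi f 0 hε
  rw [mul_div_cancel₀ _ hε.ne', scaled] at bound
  calc |ε * ∑' n : ℕ, f (ε * (n + 1)) - ∫ x in Ioi 0, f x|
      = ε * |∑' n : ℕ, f (ε * (n + 1)) - ε⁻¹ * ∫ x in Ioi 0, f x| := by
        rw [← abs_of_pos hε, ← abs_mul, abs_of_pos hε, mul_sub, mul_inv_cancel_left₀ hε.ne']
    _ ≤ ε * (2 * f c) := by gcongr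
    _ = 2 * f c * ε := mul_comm _ _

theorem tendsto_mul_tsum_nhdsGT_zero_of_unimodal (hc : 0 ≤ c) (mono : MonotoneOn f (Icc 0 c))
    (anti : AntitoneOn f (Ici c)) (integrable : IntegrableOn f (Ioi 0))
    (nonneg : ∀ t, 0 ≤ t → 0 ≤ f t) :
    Tendsto (fun ε => ε * ∑' n : ℕ, f (ε * (n + 1))) (𝓝[>] 0) (𝓝 (∫ x in Ioi 0, f x)) := by
  rw [tendsto_iff_norm_sub_tendsto_zero]
  have linear : Tendsto (fun ε : ℝ => 2 * f c * ε) (𝓝 0) (𝓝 0) := by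
    simpa using (tendsto_id (x := 𝓝 (0 : ℝ))).const_mul (2 * f c)
  refine squeeze_zero' (Eventually.of_forall fun _ => norm_nonneg _) ?_
    (tendsto_nhdsWithin_of_tendsto_nhds linear)
  filter_upwards [self_mem_nhdsWithin] with ε hε
  exact abs_mul_tsum_sub_integral_le_of_unimodal hc mono anti integrable nonneg hε

end Unimodal

section RpowMulExpNegRpow

variable {s p : ℝ}

lemma hasDerivAt_rpow_mul_exp_neg_rpow {x : ℝ} (hx : 0 < x) :
    HasDerivAt (fun x => x ^ s * exp (-x ^ p))
      (x ^ (s - 1) * exp (-x ^ p) * (s - p * x ^ p)) x := by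
  have hs : HasDerivAt (fun x => x ^ s) (s * x ^ (s - 1)) x :=
    hasDerivAt_rpow_const (Or.inl hx.ne')
  have hp : HasDerivAt (fun x => exp (-x ^ p)) (exp (-x ^ p) * -(p * x ^ (p - 1))) x :=
    (hasDerivAt_rpow_const (Or.inl hx.ne')).neg.exp
  refine (hs.mul hp).congr_deriv ?_
  have split : x ^ s = x ^ (s - 1) * x := by rw [← rpow_add_one hx.ne', sub_add_cancel]
  have split' : x ^ p = x ^ (p - 1) * x := by rw [← rpow_add_one hx.ne', sub_add_cancel]
  rw [split, split']
  ring

lemma continuousOn_rpow_mul_exp_neg_rpow (hs : 0 ≤ s) (hp : 0 < p) :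
    ContinuousOn (fun x => x ^ s * exp (-x ^ p)) (Ici 0) :=
  (continuousOn_id.rpow_const fun _ _ => Or.inr hs).mul
    (continuousOn_id.rpow_const fun _ _ => Or.inr hp.le).neg.rexp

lemma monotoneOn_rpow_mul_exp_neg_rpow (hs : 0 ≤ s) (hp : 0 < p) :
    MonotoneOn (fun x => x ^ s * exp (-x ^ p)) (Icc 0 ((s / p) ^ p⁻¹)) := by
  refine monotoneOn_of_hasDerivWithinAt_nonneg (convex_Icc _ _)
    (f' := fun x => x ^ (s - 1) * exp (-x ^ p) * (s - p * x ^ p))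
    ((continuousOn_rpow_mul_exp_neg_rpow hs hp).mono Icc_subset_Ici_self) ?_ ?_ <;>
    rw [interior_Icc] <;> intro x hx
  · exact (hasDerivAt_rpow_mul_exp_neg_rpow hx.1).hasDerivWithinAt
  have hxp : x ^ p ≤ s / p := (le_rpow_inv_iff_of_pos hx.1.le (by positivity) hp).mp hx.2.le
  have : 0 ≤ s - p * x ^ p := by rw [le_div_iff₀' hp] at hxp; linarith
  have := hx.1
  positivity

lemma antitoneOn_rpow_mul_exp_neg_rpow (hs : 0 ≤ s) (hp : 0 < p) :
    AntitoneOn (fun x => x ^ s * exp (-x ^ p)) (Ici ((s / p) ^ p⁻¹)) := by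
  have peak_nonneg : 0 ≤ (s / p) ^ p⁻¹ := by positivity
  refine antitoneOn_of_hasDerivWithinAt_nonpos (convex_Ici _)
    (f' := fun x => x ^ (s - 1) * exp (-x ^ p) * (s - p * x ^ p))
    ((continuousOn_rpow_mul_exp_neg_rpow hs hp).mono (Ici_subset_Ici.mpr peak_nonneg)) ?_ ?_ <;>
    rw [interior_Ici] <;> intro x hx
  · exact (hasDerivAt_rpow_mul_exp_neg_rpow (peak_nonneg.trans_lt hx)).hasDerivWithinAt
  have hx0 : 0 < x := peak_nonneg.trans_lt hx
  have hxp : s / p ≤ x ^ p := (rpow_inv_le_iff_of_pos (by positivity) hx0.le hp).mp hx.le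
  have : s - p * x ^ p ≤ 0 := by rw [div_le_iff₀' hp] at hxp; linarith
  exact mul_nonpos_of_nonneg_of_nonpos (by positivity) this

end RpowMulExpNegRpow

lemma tendsto_rpow_nhdsGT_zero {r : ℝ} (hr : 0 < r) :
    Tendsto (fun x : ℝ => x ^ r) (𝓝[>] 0) (𝓝[>] 0) := by
  refine tendsto_nhdsWithin_iff.mpr
    ⟨?_, eventually_nhdsWithin_of_forall fun x hx => rpow_pos_of_pos hx r⟩
  simpa [zero_rpow hr.ne'] using
    ((continuousAt_rpow_const 0 r (Or.inr hr.le)).tendsto).mono_left nhdsWithin_le_nhds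

lemma rpow_mul_tsum_pnat_eq {a A : ℝ} (ha : 0 < a) (hA : 0 < A) (n : ℕ) :
    A ^ (((n : ℝ) + 1) / a) * ∑' p : ℕ+, (p : ℝ) ^ n * exp (-A * (p : ℝ) ^ a) =
      A ^ a⁻¹ * ∑' k : ℕ, (A ^ a⁻¹ * (k + 1)) ^ (n : ℝ) * exp (-(A ^ a⁻¹ * (k + 1)) ^ a) := by
  have hA' : (A ^ a⁻¹) ^ a = A := by rw [← rpow_mul hA.le, inv_mul_cancel₀ ha.ne', rpow_one]
  have power : A ^ (((n : ℝ) + 1) / a) = A ^ a⁻¹ * (A ^ a⁻¹) ^ n := by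
    rw [← rpow_natCast, ← rpow_mul hA.le, ← rpow_add hA]
    ring_nf
  rw [tsum_pnat_eq_tsum_succ (f := fun m : ℕ => (m : ℝ) ^ n * exp (-A * (m : ℝ) ^ a)),
    ← tsum_mul_left, ← tsum_mul_left]
  refine tsum_congr fun k => ?_
  have hε : 0 ≤ A ^ a⁻¹ := by positivity
  have hk : (0 : ℝ) ≤ k + 1 := by positivity
  rw [mul_rpow hε hk, mul_rpow hε hk, hA', rpow_natCast, rpow_natCast, power, neg_mul]
  push_cast
  ring

theorem face_sum_asymptotics (a : ℝ) (ha : a ∈ Set.Ioc (0:ℝ) 1) (n : ℕ) :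
    Tendsto
      (fun A : ℝ =>
        A ^ (((n : ℝ) + 1) / a) * ∑' p : ℕ+, (p : ℝ) ^ n * Real.exp (-A * (p : ℝ) ^ a))
      (nhdsWithin 0 (Set.Ioi 0))
      (nhds (Real.Gamma (((n : ℝ) + 1) / a) / a)) := by
  obtain ⟨ha, -⟩ := ha
  have riemann := tendsto_mul_tsum_nhdsGT_zero_of_unimodal (by positivity)
    (monotoneOn_rpow_mul_exp_neg_rpow (Nat.cast_nonneg n) ha)
    (antitoneOn_rpow_mul_exp_neg_rpow (Nat.cast_nonneg n) ha)
    (integrableOn_rpow_mul_exp_neg_rpow (by linarith [n.cast_nonneg (α := ℝ)]) ha)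
    (fun t ht => by positivity)
  rw [integral_rpow_mul_exp_neg_rpow ha (by linarith [n.cast_nonneg (α := ℝ)]),
    one_div_mul_eq_div] at riemann
  refine (riemann.comp (tendsto_rpow_nhdsGT_zero (inv_pos.mpr ha))).congr' ?_
  filter_upwards [self_mem_nhdsWithin] with A hA
  exact (rpow_mul_tsum_pnat_eq ha hA n).symm
end

section
/- Let a ∈ (0,1]. Then lim_{A → 0+} A^{3/a} · ∑_{j ∈ (1/2)ℕ} (2j+1)^2 · exp(−A·j^a) = 8·Γ(3/a) / a, where the sum ranges over all half-integers j = q/2 with q ∈ ℕ (including j = 0). -/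
/-!
Put `t = A^(1/a) / 2`. Then `A^(3/a)` times the sum is `8 t³ ∑ (n+1)² exp(-(t n)^a)`, which
is the integral over `(0, ∞)` of the step function `s ↦ (t⌊s/t⌋ + t)² exp(-(t⌊s/t⌋)^a)`.
As `t → 0⁺` these converge pointwise to `s² exp(-s^a)`, and for `a ≤ 1` subadditivity of
`x ↦ x^a` dominates them by `e (s+1)² exp(-s^a)`; dominated convergence gives the limit
`∫₀^∞ s² exp(-s^a) ds = Γ(3/a)/a`.
-/

open Filter Real Set MeasureTheory Topology
open scoped ENNReal

lemma lintegral_Ici_natFloor (g : ℕ → ℝ≥0∞) :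
    ∫⁻ x in Ici (0 : ℝ), g ⌊x⌋₊ = ∑' n, g n := by
  have hcover : Ici (0 : ℝ) = ⋃ n : ℕ, Ico (n : ℝ) (n + 1) := by
    ext x
    simp only [mem_Ici, mem_iUnion, mem_Ico]
    exact ⟨fun hx => ⟨⌊x⌋₊, Nat.floor_le hx, Nat.lt_floor_add_one x⟩,
      fun ⟨n, hn, _⟩ => n.cast_nonneg.trans hn⟩
  have hdisj : Pairwise (Function.onFun Disjoint fun n : ℕ => Ico (n : ℝ) (n + 1)) := by
    intro m n hmn
    refine Set.disjoint_left.mpr fun x hm hn => hmn ?_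
    rw [← Nat.floor_eq_on_Ico m x hm, Nat.floor_eq_on_Ico n x hn]
  rw [hcover, lintegral_iUnion (fun _ => measurableSet_Ico) hdisj]
  refine tsum_congr fun n => ?_
  rw [setLIntegral_congr_fun measurableSet_Ico (fun x hx => by rw [Nat.floor_eq_on_Ico n x hx]),
    setLIntegral_const, Real.volume_Ico, add_sub_cancel_left, ENNReal.ofReal_one, mul_one]

/-- No summability assumption is needed: if `f` is not summable, both sides are `0`. -/
lemma integral_Ioi_natFloor {f : ℕ → ℝ} (hf : 0 ≤ f) :
    ∫ x in Ioi (0 : ℝ), f ⌊x⌋₊ = ∑' n, f n := by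
  rw [integral_eq_lintegral_of_nonneg_ae (f := fun x : ℝ => f ⌊x⌋₊)
      (Eventually.of_forall fun x => hf _)
      (measurable_from_nat.comp Nat.measurable_floor).aestronglyMeasurable,
    Measure.restrict_congr_set Ioi_ae_eq_Ici, lintegral_Ici_natFloor fun n => ENNReal.ofReal (f n),
    ENNReal.tsum_toReal_eq fun _ => ENNReal.ofReal_ne_top]
  exact tsum_congr fun n => ENNReal.toReal_ofReal (hf n)

lemma integral_Ioi_natFloor_div {f : ℕ → ℝ} (hf : 0 ≤ f) {t : ℝ} (ht : 0 < t) :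
    ∫ x in Ioi (0 : ℝ), f ⌊x / t⌋₊ = t * ∑' n, f n := by
  simp_rw [div_eq_inv_mul]
  rw [integral_comp_mul_left_Ioi (fun x => f ⌊x⌋₊) 0 (inv_pos.mpr ht), mul_zero,
    integral_Ioi_natFloor hf, inv_inv, smul_eq_mul]

lemma mul_natFloor_div_le {s t : ℝ} (hs : 0 ≤ s) (ht : 0 < t) : t * ⌊s / t⌋₊ ≤ s :=
  (le_div_iff₀' ht).mp (Nat.floor_le (div_nonneg hs ht.le))

lemma lt_mul_natFloor_div_add (s : ℝ) {t : ℝ} (ht : 0 < t) : s < t * ⌊s / t⌋₊ + t := by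
  rw [← mul_add_one, ← div_lt_iff₀' ht]
  exact Nat.lt_floor_add_one _

lemma tendsto_mul_natFloor_div {s : ℝ} (hs : 0 ≤ s) :
    Tendsto (fun t : ℝ => t * ⌊s / t⌋₊) (𝓝[>] 0) (𝓝 s) := by
  have hlow : Tendsto (fun t : ℝ => s - t) (𝓝[>] 0) (𝓝 s) := by
    simpa using (tendsto_const_nhds.sub tendsto_id :
      Tendsto (fun t : ℝ => s - t) (𝓝 0) _).mono_left nhdsWithin_le_nhds
  refine tendsto_of_tendsto_of_tendsto_of_le_of_le' hlow tendsto_const_nhds ?_ ?_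
  all_goals filter_upwards [self_mem_nhdsWithin] with t (ht : 0 < t)
  · linarith [lt_mul_natFloor_div_add s ht]
  · exact mul_natFloor_div_le hs ht

lemma integrableOn_add_one_pow_mul_exp_neg_rpow (k : ℕ) {a : ℝ} (ha : 0 < a) :
    IntegrableOn (fun s : ℝ => (s + 1) ^ k * exp (-s ^ a)) (Ioi 0) := by
  have hterm (i : ℕ) : IntegrableOn (fun s : ℝ => s ^ i * exp (-s ^ a)) (Ioi 0) := by
    simpa only [rpow_natCast] using
      integrableOn_rpow_mul_exp_neg_rpow (s := i) (by linarith [i.cast_nonneg (α := ℝ)]) ha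
  simp_rw [add_pow, one_pow, mul_one, Finset.sum_mul]
  refine integrable_finsetSum _ fun i _ => ?_
  simpa only [mul_right_comm _ (k.choose i : ℝ)] using (hterm i).mul_const (k.choose i : ℝ)

lemma add_pow_mul_exp_neg_rpow_le (k : ℕ) {a x s t : ℝ} (ha0 : 0 < a) (ha1 : a ≤ 1)
    (hx : 0 ≤ x) (hxs : x ≤ s) (hst : s < x + t) (ht1 : t ≤ 1) :
    (x + t) ^ k * exp (-x ^ a) ≤ exp 1 * ((s + 1) ^ k * exp (-s ^ a)) := by
  have ht : 0 ≤ t := by linarith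
  have hexponent : s ^ a ≤ x ^ a + 1 :=
    calc s ^ a ≤ (x + t) ^ a := rpow_le_rpow (hx.trans hxs) hst.le ha0.le
      _ ≤ x ^ a + t ^ a := rpow_add_le_add_rpow hx ht ha0.le ha1
      _ ≤ x ^ a + 1 := by gcongr; exact rpow_le_one ht ht1 ha0.le
  calc (x + t) ^ k * exp (-x ^ a) ≤ (s + 1) ^ k * exp (1 + -s ^ a) := by
        gcongr ?_ * exp ?_
        · exact pow_nonneg (by linarith) k
        · exact pow_le_pow_left₀ (by positivity) (by linarith) k
        · linarith
    _ = exp 1 * ((s + 1) ^ k * exp (-s ^ a)) := by rw [exp_add]; ring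

lemma tendsto_integral_natFloor_step (k : ℕ) {a : ℝ} (ha0 : 0 < a) (ha1 : a ≤ 1) :
    Tendsto
      (fun t : ℝ => ∫ s in Ioi (0 : ℝ), (t * ⌊s / t⌋₊ + t) ^ k * exp (-(t * ⌊s / t⌋₊) ^ a))
      (𝓝[>] 0) (𝓝 (∫ s in Ioi (0 : ℝ), s ^ k * exp (-s ^ a))) := by
  refine tendsto_integral_filter_of_dominated_convergence
    (fun s => exp 1 * ((s + 1) ^ k * exp (-s ^ a))) ?_ ?_
    ((integrableOn_add_one_pow_mul_exp_neg_rpow k ha0).const_mul _) ?_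
  · refine Eventually.of_forall fun t => ?_
    exact ((measurable_from_nat (f := fun n : ℕ => (t * n + t) ^ k * exp (-(t * n) ^ a))).comp
      (Nat.measurable_floor.comp (measurable_id.div_const t))).aestronglyMeasurable
  · filter_upwards [Ioo_mem_nhdsGT one_pos] with t ⟨ht0, ht1⟩
    refine (ae_restrict_iff' measurableSet_Ioi).mpr (Eventually.of_forall fun s (hs : 0 < s) => ?_)
    rw [Real.norm_of_nonneg (by positivity)]
    exact add_pow_mul_exp_neg_rpow_le k ha0 ha1 (by positivity) (mul_natFloor_div_le hs.le ht0)
      (lt_mul_natFloor_div_add s ht0) ht1.le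
  · refine (ae_restrict_iff' measurableSet_Ioi).mpr (Eventually.of_forall fun s (hs : 0 < s) => ?_)
    have hstep := tendsto_mul_natFloor_div hs.le
    have hmesh : Tendsto id (𝓝[>] (0 : ℝ)) (𝓝 0) := nhdsWithin_le_nhds
    simpa using ((hstep.add hmesh).pow k).mul ((hstep.rpow_const (Or.inr ha0.le)).neg.rexp)

theorem tendsto_pow_mul_tsum_add_one_pow_mul_exp_neg_rpow (k : ℕ) {a : ℝ} (ha0 : 0 < a)
    (ha1 : a ≤ 1) :
    Tendsto (fun t : ℝ => t ^ (k + 1) * ∑' n : ℕ, ((n : ℝ) + 1) ^ k * exp (-(t * n) ^ a))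
      (𝓝[>] 0) (𝓝 (Gamma ((k + 1) / a) / a)) := by
  have hvalue : ∫ s in Ioi (0 : ℝ), s ^ k * exp (-s ^ a) = Gamma ((k + 1) / a) / a := by
    simpa only [rpow_natCast, one_div_mul_eq_div, div_mul_eq_mul_div, one_mul] using
      integral_rpow_mul_exp_neg_rpow ha0 (q := k) (by linarith [k.cast_nonneg (α := ℝ)])
  rw [← hvalue]
  refine (tendsto_integral_natFloor_step k ha0 ha1).congr' ?_
  filter_upwards [self_mem_nhdsWithin] with t (ht : 0 < t)
  rw [integral_Ioi_natFloor_div (f := fun n : ℕ => (t * n + t) ^ k * exp (-(t * n) ^ a))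
    (fun n => by positivity) ht, pow_succ', mul_assoc]
  congr 1
  rw [← tsum_mul_left]
  exact tsum_congr fun n => by rw [← mul_add_one, mul_pow, mul_assoc]

theorem su2_face_asymptotics (a : ℝ) (ha : a ∈ Set.Ioc (0:ℝ) 1) :
    Tendsto
      (fun A : ℝ =>
        A ^ (3 / a) *
          ∑' q : ℕ, (2 * ((q : ℝ) / 2) + 1) ^ 2 * Real.exp (-A * ((q : ℝ) / 2) ^ a))
      (nhdsWithin 0 (Set.Ioi 0))
      (nhds (8 * Real.Gamma (3 / a) / a)) := by
  obtain ⟨ha0, ha1⟩ := ha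
  have hscale : Tendsto (fun A : ℝ => A ^ a⁻¹ / 2) (𝓝[>] 0) (𝓝[>] 0) := by
    refine tendsto_nhdsWithin_of_tendsto_nhds_of_eventually_within _ ?_ ?_
    · have := ((continuousAt_rpow_const 0 a⁻¹ (Or.inr (inv_pos.mpr ha0).le)).tendsto.div_const
        2).mono_left (nhdsWithin_le_nhds (s := Ioi 0))
      simpa [zero_rpow (inv_pos.mpr ha0).ne'] using this
    · filter_upwards [self_mem_nhdsWithin] with A (hA : 0 < A)
      exact div_pos (rpow_pos_of_pos hA _) two_pos
  have hlim :=
    ((tendsto_pow_mul_tsum_add_one_pow_mul_exp_neg_rpow 2 ha0 ha1).comp hscale).const_mul 8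
  rw [show (2 : ℕ) + (1 : ℝ) = 3 by norm_num, ← mul_div_assoc] at hlim
  refine hlim.congr' ?_
  filter_upwards [self_mem_nhdsWithin] with A (hA : 0 < A)
  have hroot : (A ^ a⁻¹) ^ a = A := by
    rw [← rpow_mul hA.le, inv_mul_cancel₀ ha0.ne', rpow_one]
  have hcube : 8 * (A ^ a⁻¹ / 2) ^ (2 + 1) = A ^ (3 / a) := by
    rw [div_pow, ← rpow_natCast, ← rpow_mul hA.le, div_eq_inv_mul 3]
    norm_num
    ring
  rw [Function.comp_apply, ← mul_assoc, hcube]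
  congr 1
  refine tsum_congr fun q => ?_
  rw [show A ^ a⁻¹ / 2 * q = A ^ a⁻¹ * (q / 2) by ring,
    mul_rpow (by positivity) (by positivity), hroot]
  ring_nf
end

section
/- Let S1 and S12 be real numbers. Define Γ(λ) = −λ + 6λ^2·(3S1 + 2S12) and Z(λ) = 1 − λ·(3S1 + S12). Then lim_{λ → 0} λ^{−2} · ( −Γ(λ)/Z(λ)^3 − λ ) = −9·(S1 + S12). -/
/-!
Since `(x - 6 a x²) - x (1 - b x)³ = x² (3b - 6a - 3b² x + b³ x²)`, the difference quotient
`x⁻² (-Γ(x) / Z(x)³ - x)` is, away from `x = 0`, the rational function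
`(3b - 6a - 3b² x + b³ x²) / (1 - b x)³`, which is continuous at `0` with value `3b - 6a`.
For `a = 3 S1 + 2 S12` and `b = 3 S1 + S12` this value is `-9 (S1 + S12)`.
-/

open Filter Topology

lemma sq_inv_mul_div_one_sub_mul_pow_three_sub {x a b : ℝ} (hx : x ≠ 0) (hb : 1 - x * b ≠ 0) :
    x⁻¹ ^ 2 * (-(-x + 6 * x ^ 2 * a) / (1 - x * b) ^ 3 - x) =
      (3 * b - 6 * a - 3 * x * b ^ 2 + x ^ 2 * b ^ 3) / (1 - x * b) ^ 3 := by
  field_simp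
  ring

lemma eventually_one_sub_mul_ne_zero (b : ℝ) : ∀ᶠ x in 𝓝 (0 : ℝ), 1 - x * b ≠ 0 :=
  (continuous_const.sub (continuous_id.mul continuous_const)).continuousAt.eventually_ne
    (by simp)

lemma tendsto_two_loop_quotient (a b : ℝ) :
    Tendsto (fun x : ℝ => x⁻¹ ^ 2 * (-(-x + 6 * x ^ 2 * a) / (1 - x * b) ^ 3 - x))
      (𝓝[≠] 0) (𝓝 (3 * b - 6 * a)) := by
  have hcont : ContinuousAt
      (fun x : ℝ => (3 * b - 6 * a - 3 * x * b ^ 2 + x ^ 2 * b ^ 3) / (1 - x * b) ^ 3) 0 :=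
    ContinuousAt.div (by fun_prop) (by fun_prop) (by simp)
  have hlim := hcont.tendsto.mono_left (nhdsWithin_le_nhds (s := {0}ᶜ))
  simp only [mul_zero, zero_mul, sub_zero, add_zero, ne_eq, OfNat.ofNat_ne_zero,
    not_false_eq_true, zero_pow, one_pow, div_one] at hlim
  refine hlim.congr' ?_
  filter_upwards [self_mem_nhdsWithin,
    nhdsWithin_le_nhds (eventually_one_sub_mul_ne_zero b)] with x hx hb
  exact (sq_inv_mul_div_one_sub_mul_pow_three_sub hx hb).symm

theorem phi6_matrix_two_loop_beta (S1 S12 : ℝ) :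
    Tendsto
      (fun lam : ℝ =>
        lam⁻¹ ^ 2 *
          (-(-lam + 6 * lam ^ 2 * (3 * S1 + 2 * S12)) /
              (1 - lam * (3 * S1 + S12)) ^ 3 - lam))
      (nhdsWithin 0 {0}ᶜ)
      (nhds (-9 * (S1 + S12))) := by
  convert tendsto_two_loop_quotient (3 * S1 + 2 * S12) (3 * S1 + S12) using 2
  ring
end

section
/- Let S, A, C1, C2 be real numbers. Define Z(λ) = 1 − 2λS + 2λ^2·(2A + 3S^2) + 4λ^2·(2C1 + C2) and Γ(λ) = −λ + 6λ^2·S − λ^3·(20A + 30S^2 + 24C1 + 12C2). Then lim_{λ → 0} λ^{−3} · ( −Γ(λ)/Z(λ)^3 − λ ) = 8A. -/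
open Filter Topology

/-!
Write `Z = 1 + λv` with `v = λ(4A + 6S² + 8C₁ + 4C₂) - 2S`. Expanding `Z³ = 1 + 3λv + 3λ²v² + λ³v³`, the
terms of order `λ` and `λ²` of `-Γ - λZ³` cancel, and `-Γ - λZ³ = λ³ R(λ)` for the polynomial
`R(λ) = 8A + 12S² - 3v² - λv³`. Hence `λ⁻³(-Γ/Z³ - λ) = R/Z³`, which is continuous at `0` with value
`R(0) / Z(0)³ = 8A`.
-/

theorem tendsto_inv_pow_mul_of_eventuallyEq_pow_mul {𝕜 : Type*} [NormedField 𝕜] {f q : 𝕜 → 𝕜}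
    {n : ℕ} (hf : ∀ᶠ x in 𝓝[≠] 0, f x = x ^ n * q x) (hq : ContinuousAt q 0) :
    Tendsto (fun x => x⁻¹ ^ n * f x) (𝓝[≠] 0) (𝓝 (q 0)) := by
  refine (hq.tendsto.mono_left nhdsWithin_le_nhds).congr' ?_
  filter_upwards [hf, self_mem_nhdsWithin] with x hfx hx
  rw [hfx, ← mul_assoc, ← mul_pow, inv_mul_cancel₀ hx, one_pow, one_mul]

namespace Phi6

variable (S A C1 C2 : ℝ)

def wavefunctionRenorm (lam : ℝ) : ℝ :=
  1 - 2 * lam * S + 2 * lam ^ 2 * (2 * A + 3 * S ^ 2) + 4 * lam ^ 2 * (2 * C1 + C2)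

def vertexRenorm (lam : ℝ) : ℝ :=
  -lam + 6 * lam ^ 2 * S - lam ^ 3 * (20 * A + 30 * S ^ 2 + 24 * C1 + 12 * C2)

def betaRemainder (lam : ℝ) : ℝ :=
  8 * A + 12 * S ^ 2 - 3 * (lam * (4 * A + 6 * S ^ 2 + 8 * C1 + 4 * C2) - 2 * S) ^ 2 -
    lam * (lam * (4 * A + 6 * S ^ 2 + 8 * C1 + 4 * C2) - 2 * S) ^ 3

theorem wavefunctionRenorm_zero : wavefunctionRenorm S A C1 C2 0 = 1 := by
  simp [wavefunctionRenorm]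

theorem betaRemainder_zero : betaRemainder S A C1 C2 0 = 8 * A := by
  simp only [betaRemainder]
  ring

theorem continuous_wavefunctionRenorm : Continuous (wavefunctionRenorm S A C1 C2) := by
  unfold wavefunctionRenorm
  fun_prop

theorem continuous_betaRemainder : Continuous (betaRemainder S A C1 C2) := by
  unfold betaRemainder
  fun_prop

theorem neg_vertexRenorm_sub_mul_wavefunctionRenorm_pow (lam : ℝ) :
    -vertexRenorm S A C1 C2 lam - lam * wavefunctionRenorm S A C1 C2 lam ^ 3 =
      lam ^ 3 * betaRemainder S A C1 C2 lam := by
  simp only [vertexRenorm, wavefunctionRenorm, betaRemainder]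
  ring

theorem neg_vertexRenorm_div_sub_eq {lam : ℝ} (hZ : wavefunctionRenorm S A C1 C2 lam ≠ 0) :
    -vertexRenorm S A C1 C2 lam / wavefunctionRenorm S A C1 C2 lam ^ 3 - lam =
      lam ^ 3 * (betaRemainder S A C1 C2 lam / wavefunctionRenorm S A C1 C2 lam ^ 3) := by
  rw [← mul_div_assoc, ← neg_vertexRenorm_sub_mul_wavefunctionRenorm_pow, sub_div,
    mul_div_cancel_right₀ _ (pow_ne_zero 3 hZ)]

theorem eventually_wavefunctionRenorm_ne_zero :
    ∀ᶠ lam in 𝓝 0, wavefunctionRenorm S A C1 C2 lam ≠ 0 :=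
  (continuous_wavefunctionRenorm S A C1 C2).continuousAt.eventually_ne
    (by rw [wavefunctionRenorm_zero]; exact one_ne_zero)

end Phi6

open Phi6 in
theorem phi6_tensor_four_loop_beta (S A C1 C2 : ℝ) :
    Tendsto
      (fun lam : ℝ =>
        lam⁻¹ ^ 3 *
          (-(-lam + 6 * lam ^ 2 * S -
                lam ^ 3 * (20 * A + 30 * S ^ 2 + 24 * C1 + 12 * C2)) /
              (1 - 2 * lam * S + 2 * lam ^ 2 * (2 * A + 3 * S ^ 2) +
                  4 * lam ^ 2 * (2 * C1 + C2)) ^ 3 - lam))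
      (nhdsWithin 0 {0}ᶜ)
      (nhds (8 * A)) := by
  have hq : ContinuousAt
      (fun lam => betaRemainder S A C1 C2 lam / wavefunctionRenorm S A C1 C2 lam ^ 3) 0 :=
    ((continuous_betaRemainder S A C1 C2).continuousAt).div
      ((continuous_wavefunctionRenorm S A C1 C2).continuousAt.pow 3)
      (by simp [wavefunctionRenorm_zero])
  have hlim := tendsto_inv_pow_mul_of_eventuallyEq_pow_mul
    (f := fun lam => -vertexRenorm S A C1 C2 lam / wavefunctionRenorm S A C1 C2 lam ^ 3 - lam)
    (((eventually_wavefunctionRenorm_ne_zero S A C1 C2).filter_mono nhdsWithin_le_nhds).mono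
      fun _ => neg_vertexRenorm_div_sub_eq S A C1 C2) hq
  rwa [betaRemainder_zero, wavefunctionRenorm_zero, one_pow, div_one] at hlim
end
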